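/- Let φ(x) = 1 + x, let ε₀ > 0 be a small constant, and let η ∈ C₀^∞(ℝ) be a cutoff with η(x) = 1 for x ∈ [0, ε₀]. Then there is a constant c > 0 such that for all sufficiently small δ > 0, taking f = 1 on the square [−δ, δ] × [−δ, δ] and 0 elsewhere, one has ‖Mf‖_{L^q(ℝ²)} ≥ c δ^{1 + 1/q}; consequently ‖Mf‖_{L^q(ℝ²)} / ‖f‖_{L^p(ℝ²)} ≥ c′ δ^{1 + 1/q − 2/p}. In particular, the bound ‖Mf‖_{L^q} ≤ C‖f‖_{L^p} fails whenever 1 + 1/q − 2/p < 0. -/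
import Mathlib


open MeasureTheory Set
open scoped ENNReal

/-- The maximal operator along the curve `(x, x² φ(x))` with nonisotropic dilations
`(t, t²)`, with supremum over `t ∈ [1,2]`. -/
noncomputable def maxOpCurve (φ η : ℝ → ℝ) (f : ℝ × ℝ → ℝ) (y : ℝ × ℝ) : ℝ :=
  ⨆ t : Set.Icc (1 : ℝ) 2,
    |∫ x : ℝ, f (y.1 - t * x, y.2 - t ^ 2 * x ^ 2 * φ x) * η x|

/-- The indicator function of the square `[-δ, δ] × [-δ, δ]`. -/
noncomputable def sqInd (δ : ℝ) : ℝ × ℝ → ℝ :=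
  Set.indicator (Set.Icc (-δ) δ ×ˢ Set.Icc (-δ) δ) fun _ => (1 : ℝ)

set_option maxHeartbeats 1000000 in
lemma key_pointwise (ε₀ δ : ℝ) (hε : 0 < ε₀) (hε1 : ε₀ ≤ 1/100) (hδ : 0 < δ)
    (hδ1 : δ < ε₀/4) (η : ℝ → ℝ) (hη1 : ∀ x ∈ Icc (0:ℝ) ε₀, η x = 1)
    (y : ℝ × ℝ)
    (hy1 : y.1 ∈ Icc (ε₀/2 - ε₀^2/100) (ε₀/2))
    (hy2 : y.2 ∈ Icc ((ε₀/2)^2 + (ε₀/2)^3/2) ((ε₀/2 - ε₀^2/100)^2 + (ε₀/2 - ε₀^2/100)^3)) :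
    δ ≤ maxOpCurve (fun x => 1 + x) η (sqInd δ) y := by
  obtain ⟨hy1a, hy1b⟩ := hy1
  obtain ⟨hy2a, hy2b⟩ := hy2
  have hεsq : ε₀ * ε₀ ≤ ε₀ * (1/100) := mul_le_mul_of_nonneg_left hε1 hε.le
  have hεsq' : ε₀^2 ≤ ε₀/100 := by nlinarith [hεsq]
  have hεone : ε₀ ≤ 1 := by linarith
  have hy1pos : 0 < y.1 := by linarith
  set X : ℝ → Set ℝ := fun t =>
    (fun x => y.1 - t * x) ⁻¹' Icc (-δ) δ ∩
    (fun x => y.2 - t ^ 2 * x ^ 2 * (1 + x)) ⁻¹' Icc (-δ) δ with hX_def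
  have hXmeas : ∀ t, MeasurableSet (X t) := fun t =>
    (measurableSet_Icc.preimage (by fun_prop)).inter (measurableSet_Icc.preimage (by fun_prop))
  have hXsub : ∀ t, 1 ≤ t → t ≤ 2 → X t ⊆ Icc ((y.1 - δ)/t) ((y.1 + δ)/t) := by
    intro t ht1 ht2 x hx
    obtain ⟨⟨h1, h2⟩, -⟩ := hx
    simp only at h1 h2
    have htpos : (0:ℝ) < t := by linarith
    constructor
    · rw [div_le_iff₀ htpos]; linarith [mul_comm x t]
    · rw [le_div_iff₀ htpos]; linarith [mul_comm x t]
  have hX0ε : ∀ t, 1 ≤ t → t ≤ 2 → X t ⊆ Icc 0 ε₀ := by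
    intro t ht1 ht2 x hx
    obtain ⟨h1, h2⟩ := hXsub t ht1 ht2 hx
    have htpos : (0:ℝ) < t := by linarith
    constructor
    · have h0 : (0:ℝ) ≤ (y.1 - δ)/t := div_nonneg (by linarith) htpos.le
      linarith
    · have h0 : (y.1 + δ)/t ≤ y.1 + δ := div_le_self (by linarith) ht1
      linarith
  have hrep : ∀ t, 1 ≤ t → t ≤ 2 →
      (fun x : ℝ => sqInd δ (y.1 - t * x, y.2 - t ^ 2 * x ^ 2 * (1 + x)) * η x)
        = (X t).indicator (1 : ℝ → ℝ) := by
    intro t ht1 ht2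
    funext x
    by_cases hx : x ∈ X t
    · rw [Set.indicator_of_mem hx]
      obtain ⟨h1, h2⟩ := hx
      have hmem : (y.1 - t * x, y.2 - t ^ 2 * x ^ 2 * (1 + x)) ∈
          Icc (-δ) δ ×ˢ Icc (-δ) δ := ⟨h1, h2⟩
      rw [sqInd, Set.indicator_of_mem hmem, hη1 x (hX0ε t ht1 ht2 ⟨h1, h2⟩)]
      norm_num
    · have hnm : (y.1 - t * x, y.2 - t ^ 2 * x ^ 2 * (1 + x)) ∉
          Icc (-δ) δ ×ˢ Icc (-δ) δ := fun hmem => hx ⟨hmem.1, hmem.2⟩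
      rw [Set.indicator_of_notMem hx, sqInd, Set.indicator_of_notMem hnm, zero_mul]
  have hvol_le : ∀ t, 1 ≤ t → t ≤ 2 → volume (X t) ≤ ENNReal.ofReal (2*δ) := by
    intro t ht1 ht2
    refine le_trans (measure_mono (hXsub t ht1 ht2)) ?_
    rw [Real.volume_Icc]
    apply ENNReal.ofReal_le_ofReal
    have htpos : (0:ℝ) < t := by linarith
    rw [div_sub_div_same, show y.1 + δ - (y.1 - δ) = 2*δ by ring]
    exact div_le_self (by linarith) ht1
  have hint : ∀ t, 1 ≤ t → t ≤ 2 →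
      (∫ x : ℝ, sqInd δ (y.1 - t * x, y.2 - t ^ 2 * x ^ 2 * (1 + x)) * η x)
        = (volume (X t)).toReal := by
    intro t ht1 ht2
    rw [show (fun x : ℝ => sqInd δ (y.1 - t * x, y.2 - t ^ 2 * x ^ 2 * (1 + x)) * η x)
      = (X t).indicator (1 : ℝ → ℝ) from hrep t ht1 ht2]
    exact integral_indicator_one (hXmeas t)
  have hbdd : BddAbove (Set.range fun t : Set.Icc (1:ℝ) 2 =>
      |∫ x : ℝ, sqInd δ (y.1 - ↑t * x, y.2 - ↑t ^ 2 * x ^ 2 * (1 + x)) * η x|) := by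
    refine ⟨2*δ, ?_⟩
    rintro v ⟨⟨t, ht1, ht2⟩, rfl⟩
    show |∫ x : ℝ, sqInd δ (y.1 - t * x, y.2 - t ^ 2 * x ^ 2 * (1 + x)) * η x| ≤ 2*δ
    rw [hint t ht1 ht2, abs_of_nonneg ENNReal.toReal_nonneg]
    exact ENNReal.toReal_le_of_le_ofReal (by linarith) (hvol_le t ht1 ht2)
  -- the good parameter t
  set s : ℝ := y.2 - y.1^2 with hs_def
  have hsqb : y.1^2 ≤ (ε₀/2)^2 := pow_le_pow_left₀ hy1pos.le hy1b 2
  have hcubeb : y.1^3 ≤ (ε₀/2)^3 := pow_le_pow_left₀ hy1pos.le hy1b 3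
  have hapos : 0 < ε₀/2 - ε₀^2/100 := by linarith
  have hsqa : (ε₀/2 - ε₀^2/100)^2 ≤ y.1^2 := pow_le_pow_left₀ hapos.le hy1a 2
  have hcubea : (ε₀/2 - ε₀^2/100)^3 ≤ y.1^3 := pow_le_pow_left₀ hapos.le hy1a 3
  have hs1 : y.1^3/2 ≤ s := by simp only [hs_def]; linarith
  have hs2 : s ≤ y.1^3 := by simp only [hs_def]; linarith
  have hspos : 0 < s := by linarith [pow_pos hy1pos 3]
  set x₀ : ℝ := s / y.1^2 with hx0_def
  have hx0pos : 0 < x₀ := div_pos hspos (by positivity)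
  have hx0le : x₀ ≤ y.1 := by
    rw [hx0_def, div_le_iff₀ (by positivity)]
    have hy3 : y.1 * y.1^2 = y.1^3 := by ring
    linarith
  have hx0ge : y.1/2 ≤ x₀ := by
    rw [hx0_def, le_div_iff₀ (by positivity)]
    have hy3 : y.1/2 * y.1^2 = y.1^3/2 := by ring
    linarith
  set t : ℝ := y.1 / x₀ with ht_def
  have ht_eq : t * x₀ = y.1 := div_mul_cancel₀ _ hx0pos.ne'
  have ht1 : 1 ≤ t := by rw [ht_def, le_div_iff₀ hx0pos]; linarith
  have ht2 : t ≤ 2 := by rw [ht_def, div_le_iff₀ hx0pos]; linarith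
  have hsx : y.1^2 * x₀ = s := by
    rw [hx0_def, mul_div_cancel₀ _ (by positivity)]
  have h1sq : t^2 * x₀^2 = y.1^2 := by
    linear_combination (t * x₀ + y.1) * ht_eq
  have hy2eq : y.2 = t^2 * x₀^2 * (1 + x₀) := by
    linear_combination (-(1:ℝ) - x₀) * h1sq - hsx - hs_def
  have hJsub : Icc (x₀ - δ/2) (x₀ + δ/2) ⊆ X t := by
    intro x hx
    obtain ⟨hxl, hxr⟩ := hx
    have hxnn : 0 ≤ x := by linarith
    have hxε : x ≤ ε₀ := by linarith
    have hx0ε : x₀ ≤ ε₀ := by linarith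
    have habsd : |x₀ - x| ≤ δ/2 := abs_le.mpr ⟨by linarith, by linarith⟩
    constructor
    · have heq : y.1 - t * x = t * (x₀ - x) := by linear_combination -ht_eq
      have habs : |y.1 - t * x| ≤ δ := by
        rw [heq, abs_mul, abs_of_pos (show (0:ℝ) < t by linarith)]
        calc t * |x₀ - x| ≤ 2 * (δ/2) :=
              mul_le_mul ht2 habsd (abs_nonneg _) (by norm_num)
          _ = δ := by ring
      exact abs_le.mp habs
    · have heq : y.2 - t^2 * x^2 * (1 + x)
          = t^2 * ((x₀ - x) * (x₀ + x + x₀^2 + x₀*x + x^2)) := by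
        linear_combination hy2eq
      have hA : 0 ≤ x₀ + x + x₀^2 + x₀*x + x^2 := by
        linarith [mul_nonneg hx0pos.le hxnn, sq_nonneg x₀, sq_nonneg x]
      have e1 : x₀*x₀ ≤ ε₀*1 := mul_le_mul hx0ε (hx0ε.trans hεone) hx0pos.le hε.le
      have e2 : x*x ≤ ε₀*1 := mul_le_mul hxε (hxε.trans hεone) hxnn hε.le
      have e3 : x₀*x ≤ ε₀*1 := mul_le_mul hx0ε (hxε.trans hεone) hxnn hε.le
      have hA5 : x₀ + x + x₀^2 + x₀*x + x^2 ≤ 5*ε₀ := by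
        linarith [e1, e2, e3, pow_two x₀, pow_two x]
      have ht4 : t^2 ≤ 4 := by
        have h22 : t*t ≤ 2*2 := mul_le_mul ht2 ht2 (by linarith) (by norm_num)
        linarith [pow_two t]
      have hb1 : |(x₀ - x) * (x₀ + x + x₀^2 + x₀*x + x^2)| ≤ δ/2 * (5*ε₀) := by
        rw [abs_mul, abs_of_nonneg hA]
        exact mul_le_mul habsd hA5 hA (by linarith)
      have hb2 : |y.2 - t^2 * x^2 * (1 + x)| ≤ 4 * (δ/2 * (5*ε₀)) := by
        rw [heq, abs_mul, abs_of_nonneg (sq_nonneg t)]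
        exact mul_le_mul ht4 hb1 (abs_nonneg _) (by norm_num)
      have hb3 : 4 * (δ/2 * (5*ε₀)) ≤ δ := by linarith [mul_le_mul_of_nonneg_right hε1 hδ.le]
      exact abs_le.mp (hb2.trans hb3)
  have hvol_ge : ENNReal.ofReal δ ≤ volume (X t) := by
    calc ENNReal.ofReal δ = volume (Icc (x₀ - δ/2) (x₀ + δ/2)) := by
          rw [Real.volume_Icc]; congr 1; ring
      _ ≤ volume (X t) := measure_mono hJsub
  have hδint : δ ≤ (volume (X t)).toReal := by
    have hfin : volume (X t) ≠ ⊤ :=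
      ne_top_of_le_ne_top ENNReal.ofReal_ne_top (hvol_le t ht1 ht2)
    calc δ = (ENNReal.ofReal δ).toReal := (ENNReal.toReal_ofReal hδ.le).symm
      _ ≤ (volume (X t)).toReal := ENNReal.toReal_mono hfin hvol_ge
  have hkey : δ ≤ |∫ x : ℝ, sqInd δ (y.1 - t * x, y.2 - t ^ 2 * x ^ 2 * (1 + x)) * η x| := by
    rw [hint t ht1 ht2, abs_of_nonneg ENNReal.toReal_nonneg]
    exact hδint
  exact le_trans hkey (le_ciSup hbdd ⟨t, ht1, ht2⟩)

lemma sqInd_eLpNorm_aux (δ p : ℝ) (hδ : 0 < δ) (hp : 1 ≤ p) :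
    eLpNorm (sqInd δ) (ENNReal.ofReal p) volume = ENNReal.ofReal ((4 * δ ^ 2) ^ (1 / p)) := by
  have hp0 : (0:ℝ) < p := lt_of_lt_of_le one_pos hp
  have hmeas : MeasurableSet (Set.Icc (-δ) δ ×ˢ Set.Icc (-δ) δ) :=
    (measurableSet_Icc.prod measurableSet_Icc)
  rw [sqInd, eLpNorm_indicator_const hmeas (by simp [ENNReal.ofReal_eq_zero]; linarith)
      ENNReal.ofReal_ne_top]
  have hvol : volume (Set.Icc (-δ) δ ×ˢ Set.Icc (-δ) δ) = ENNReal.ofReal (4 * δ ^ 2) := by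
    rw [Measure.volume_eq_prod, Measure.prod_prod, Real.volume_Icc,
      ← ENNReal.ofReal_mul (by linarith)]
    congr 1; ring
  rw [hvol, ENNReal.toReal_ofReal hp0.le,
    ENNReal.ofReal_rpow_of_pos (by positivity)]
  simp

set_option maxHeartbeats 1000000 in
/-- **Lower bound for the counterexample.** Let `φ(x) = 1 + x`, let `ε₀ > 0` be small and let
`η ∈ C₀^∞(ℝ)` with `η = 1` on `[0, ε₀]`.  Then there is `c > 0` such that for all sufficiently
small `δ > 0`, with `f` the characteristic function of `[-δ,δ]²`, one has
`‖Mf‖_{L^q} ≥ c δ^{1+1/q}`, and consequently `‖Mf‖_{L^q} ≥ c δ^{1+1/q-2/p} ‖f‖_{L^p}`.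
In particular the bound `‖Mf‖_{L^q} ≤ C ‖f‖_{L^p}` fails whenever `1 + 1/q - 2/p < 0`. -/
theorem counterexample_lower_bound :
    ∃ ε₁ > 0, ∀ ε₀ : ℝ, 0 < ε₀ → ε₀ ≤ ε₁ →
      ∀ η : ℝ → ℝ, ContDiff ℝ (⊤ : ℕ∞) η → HasCompactSupport η →
        (∀ x ∈ Set.Icc (0 : ℝ) ε₀, η x = 1) →
      ∀ p q : ℝ, 1 ≤ p → 1 ≤ q →
      (∃ c > 0, ∃ δ₁ > 0, ∀ δ : ℝ, 0 < δ → δ < δ₁ →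
        ENNReal.ofReal (c * δ ^ (1 + 1 / q)) ≤
          eLpNorm (maxOpCurve (fun x => 1 + x) η (sqInd δ)) (ENNReal.ofReal q) volume ∧
        ENNReal.ofReal (c * δ ^ (1 + 1 / q - 2 / p)) *
            eLpNorm (sqInd δ) (ENNReal.ofReal p) volume ≤
          eLpNorm (maxOpCurve (fun x => 1 + x) η (sqInd δ)) (ENNReal.ofReal q) volume) ∧
      (1 + 1 / q - 2 / p < 0 →
        ¬ ∃ C : ℝ, ∀ f : ℝ × ℝ → ℝ, Measurable f → HasCompactSupport f →
          eLpNorm (maxOpCurve (fun x => 1 + x) η f) (ENNReal.ofReal q) volume ≤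
            ENNReal.ofReal C * eLpNorm f (ENNReal.ofReal p) volume) := by
  refine ⟨1/100, by norm_num, ?_⟩
  intro ε₀ hε hε1 η hηsm hηsupp hη1 p q hp hq
  have hp0 : (0:ℝ) < p := lt_of_lt_of_le one_pos hp
  have hq0 : (0:ℝ) < q := lt_of_lt_of_le one_pos hq
  -- the region
  set A : Set (ℝ × ℝ) :=
    Icc (ε₀/2 - ε₀^2/100) (ε₀/2) ×ˢ
      Icc ((ε₀/2)^2 + (ε₀/2)^3/2) ((ε₀/2 - ε₀^2/100)^2 + (ε₀/2 - ε₀^2/100)^3) with hA_def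
  set m : ℝ := (ε₀/2 - (ε₀/2 - ε₀^2/100)) *
      ((ε₀/2 - ε₀^2/100)^2 + (ε₀/2 - ε₀^2/100)^3 - ((ε₀/2)^2 + (ε₀/2)^3/2)) with hm_def
  have hεsq : ε₀^2 ≤ ε₀*(1/100) := by nlinarith
  have hd : ε₀^3/400 ≤ (ε₀/2 - ε₀^2/100)^2 + (ε₀/2 - ε₀^2/100)^3 - ((ε₀/2)^2 + (ε₀/2)^3/2) := by
    have h4 : ε₀^4 ≤ ε₀^3*(1/100) := by nlinarith [pow_pos hε 3]
    have h5 : ε₀^5 ≤ ε₀^4*(1/100) := by nlinarith [pow_pos hε 4]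
    have h6 : ε₀^6 ≤ ε₀^5*(1/100) := by nlinarith [pow_pos hε 5]
    nlinarith [h4, h5, h6, pow_pos hε 3, pow_pos hε 4, pow_pos hε 5, pow_pos hε 6]
  have hm_pos : 0 < m := by
    rw [hm_def]
    have h1 : 0 < ε₀/2 - (ε₀/2 - ε₀^2/100) := by have := pow_pos hε 2; linarith
    have := pow_pos hε 3
    exact mul_pos h1 (by linarith)
  have hAmeas : MeasurableSet A := measurableSet_Icc.prod measurableSet_Icc
  have hAvol : volume A = ENNReal.ofReal m := by
    rw [hA_def, Measure.volume_eq_prod, Measure.prod_prod, Real.volume_Icc, Real.volume_Icc,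
      hm_def, ENNReal.ofReal_mul (by linarith [pow_pos hε 2])]
  -- the constant
  set c : ℝ := (min m 1)/4 with hc_def
  have hmin_pos : 0 < min m 1 := lt_min hm_pos one_pos
  have hc_pos : 0 < c := by rw [hc_def]; linarith
  have hq_ne : ENNReal.ofReal q ≠ 0 := by
    simp only [ne_eq, ENNReal.ofReal_eq_zero, not_le]; linarith
  have hminm : min m 1 ≤ m ^ (1/q) := by
    rcases le_total 1 m with h | h
    · calc min m 1 ≤ 1 := min_le_right _ _
        _ = m ^ (0:ℝ) := (Real.rpow_zero m).symm
        _ ≤ m ^ (1/q) := Real.rpow_le_rpow_of_exponent_le h (by positivity)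
    · calc min m 1 ≤ m := min_le_left _ _
        _ = m ^ (1:ℝ) := (Real.rpow_one m).symm
        _ ≤ m ^ (1/q) := Real.rpow_le_rpow_of_exponent_ge hm_pos h
            (by rw [div_le_one hq0]; linarith)
  have Hmain : ∀ δ : ℝ, 0 < δ → δ < ε₀/4 →
      ENNReal.ofReal (c * δ ^ (1 + 1 / q)) ≤
        eLpNorm (maxOpCurve (fun x => 1 + x) η (sqInd δ)) (ENNReal.ofReal q) volume ∧
      ENNReal.ofReal (c * δ ^ (1 + 1 / q - 2 / p)) *
          eLpNorm (sqInd δ) (ENNReal.ofReal p) volume ≤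
        eLpNorm (maxOpCurve (fun x => 1 + x) η (sqInd δ)) (ENNReal.ofReal q) volume := by
    intro δ hδ hδ1
    have hδ1' : δ < 1 := by nlinarith
    -- pointwise bound and eLpNorm lower bound
    have hlow : ENNReal.ofReal (δ * m ^ (1/q)) ≤
        eLpNorm (maxOpCurve (fun x => 1 + x) η (sqInd δ)) (ENNReal.ofReal q) volume := by
      have hmono : ∀ y, ‖A.indicator (fun _ => δ) y‖ ≤
          ‖maxOpCurve (fun x => 1 + x) η (sqInd δ) y‖ := by
        intro y
        by_cases hy : y ∈ A
        · rw [Set.indicator_of_mem hy]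
          have hkey := key_pointwise ε₀ δ hε hε1 hδ hδ1 η hη1 y hy.1 hy.2
          rw [Real.norm_eq_abs, Real.norm_eq_abs, abs_of_pos hδ]
          exact le_trans hkey (le_abs_self _)
        · rw [Set.indicator_of_notMem hy]
          simp [abs_nonneg]
      refine le_trans (le_of_eq ?_) (eLpNorm_mono hmono)
      rw [eLpNorm_indicator_const hAmeas hq_ne ENNReal.ofReal_ne_top, hAvol,
        ENNReal.toReal_ofReal hq0.le, ENNReal.ofReal_rpow_of_pos hm_pos,
        ENNReal.ofReal_mul hδ.le]
      congr 1
      rw [Real.enorm_eq_ofReal hδ.le]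
    have hδq : δ ^ (1/q : ℝ) ≤ 1 := Real.rpow_le_one hδ.le hδ1'.le (by positivity)
    have hsplit : δ ^ (1 + 1/q : ℝ) = δ * δ ^ (1/q : ℝ) := by
      rw [Real.rpow_add hδ, Real.rpow_one]
    have goal1 : c * δ ^ (1 + 1/q : ℝ) ≤ δ * m ^ (1/q) := by
      rw [hsplit]
      have h1 : c * (δ * δ ^ (1/q:ℝ)) ≤ c * (δ * 1) := by
        apply mul_le_mul_of_nonneg_left _ hc_pos.le
        apply mul_le_mul_of_nonneg_left hδq hδ.le
      have h2 : c * (δ * 1) ≤ m ^ (1/q) * δ := by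
        rw [mul_one]
        apply mul_le_mul_of_nonneg_right _ hδ.le
        rw [hc_def]; linarith
      calc c * (δ * δ ^ (1/q:ℝ)) ≤ c * (δ * 1) := h1
        _ ≤ m ^ (1/q) * δ := h2
        _ = δ * m ^ (1/q) := mul_comm _ _
    constructor
    · exact le_trans (ENNReal.ofReal_le_ofReal goal1) hlow
    · rw [sqInd_eLpNorm_aux δ p hδ hp, ← ENNReal.ofReal_mul (by positivity)]
      refine le_trans (ENNReal.ofReal_le_ofReal ?_) hlow
      have e1 : ((4:ℝ) * δ ^ 2) ^ (1/p : ℝ) = 4 ^ (1/p:ℝ) * δ ^ (2/p : ℝ) := by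
        rw [Real.mul_rpow (by norm_num) (sq_nonneg δ)]
        congr 1
        rw [← Real.rpow_natCast δ 2, ← Real.rpow_mul hδ.le]
        congr 1
        push_cast
        ring
      have e2 : δ ^ (1 + 1/q - 2/p : ℝ) * δ ^ (2/p : ℝ) = δ ^ (1 + 1/q : ℝ) := by
        rw [← Real.rpow_add hδ]; ring_nf
      have e3 : (4:ℝ) ^ (1/p:ℝ) ≤ 4 := by
        calc (4:ℝ) ^ (1/p:ℝ) ≤ 4 ^ (1:ℝ) :=
              Real.rpow_le_rpow_of_exponent_le (by norm_num)
                (by rw [div_le_one hp0]; linarith)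
          _ = 4 := Real.rpow_one 4
      have e4 : (0:ℝ) ≤ δ ^ (1 + 1/q - 2/p : ℝ) := Real.rpow_nonneg hδ.le _
      calc c * δ ^ (1 + 1/q - 2/p : ℝ) * ((4:ℝ) * δ ^ 2) ^ (1/p : ℝ)
          = (c * 4 ^ (1/p:ℝ)) * (δ ^ (1 + 1/q - 2/p : ℝ) * δ ^ (2/p : ℝ)) := by
            rw [e1]; ring
        _ = (c * 4 ^ (1/p:ℝ)) * δ ^ (1 + 1/q : ℝ) := by rw [e2]
        _ ≤ (min m 1) * δ ^ (1 + 1/q : ℝ) := by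
            apply mul_le_mul_of_nonneg_right _ (Real.rpow_nonneg hδ.le _)
            calc c * 4 ^ (1/p:ℝ) ≤ c * 4 := by
                  apply mul_le_mul_of_nonneg_left e3 hc_pos.le
              _ = min m 1 := by rw [hc_def]; ring
        _ ≤ δ * m ^ (1/q) := by
            rw [hsplit]
            calc (min m 1) * (δ * δ ^ (1/q:ℝ)) ≤ (min m 1) * (δ * 1) := by
                  apply mul_le_mul_of_nonneg_left _ hmin_pos.le
                  apply mul_le_mul_of_nonneg_left hδq hδ.le
              _ = (min m 1) * δ := by ring
              _ ≤ m ^ (1/q) * δ := mul_le_mul_of_nonneg_right hminm hδ.le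
              _ = δ * m ^ (1/q) := mul_comm _ _
  have hδ₁pos : (0:ℝ) < ε₀/4 := by positivity
  refine ⟨⟨c, hc_pos, ε₀/4, hδ₁pos, Hmain⟩, ?_⟩
  -- failure of boundedness
  intro he ⟨C, hC⟩
  set e : ℝ := 1 + 1/q - 2/p with he_def
  set K : ℝ := ((|C| + 1)/c) ^ (1/e) with hK_def
  have hKpos : 0 < K := Real.rpow_pos_of_pos (by positivity) _
  set δ : ℝ := min (ε₀/8) K with hδ_def
  have hδpos : 0 < δ := lt_min (by positivity) hKpos
  have hδlt : δ < ε₀/4 := lt_of_le_of_lt (min_le_left _ _) (by linarith)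
  have hfm : Measurable (sqInd δ) :=
    (measurable_const.indicator (measurableSet_Icc.prod measurableSet_Icc))
  have hfc : HasCompactSupport (sqInd δ) := by
    apply HasCompactSupport.intro (isCompact_Icc.prod isCompact_Icc)
    intro x hx
    exact Set.indicator_of_notMem hx _
  have hN : eLpNorm (sqInd δ) (ENNReal.ofReal p) volume
      = ENNReal.ofReal ((4 * δ ^ 2) ^ (1/p)) := sqInd_eLpNorm_aux δ p hδpos hp
  have hN0 : eLpNorm (sqInd δ) (ENNReal.ofReal p) volume ≠ 0 := by
    rw [hN]
    exact (ENNReal.ofReal_pos.mpr (by positivity)).ne'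
  have hNtop : eLpNorm (sqInd δ) (ENNReal.ofReal p) volume ≠ ⊤ := by
    rw [hN]; exact ENNReal.ofReal_ne_top
  have hchain := le_trans ((Hmain δ hδpos hδlt).2) (hC (sqInd δ) hfm hfc)
  have hle : ENNReal.ofReal (c * δ ^ e) ≤ ENNReal.ofReal C :=
    (ENNReal.mul_le_mul_iff_left hN0 hNtop).mp hchain
  have hKe : K ^ e = (|C| + 1)/c := by
    rw [hK_def, ← Real.rpow_mul (by positivity),
      one_div_mul_cancel he.ne, Real.rpow_one]
  have hδe : K ^ e ≤ δ ^ e :=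
    Real.rpow_le_rpow_of_nonpos hδpos (min_le_right _ _) he.le
  have hbig : |C| + 1 ≤ c * δ ^ e := by
    calc |C| + 1 = c * (((|C| + 1)/c)) := by field_simp
      _ = c * K ^ e := by rw [hKe]
      _ ≤ c * δ ^ e := mul_le_mul_of_nonneg_left hδe hc_pos.le
  have hCpos : c * δ ^ e ≤ C := by
    rcases ENNReal.ofReal_le_ofReal_iff'.mp hle with h | h
    · exact h
    · nlinarith [Real.rpow_pos_of_pos hδpos e, hc_pos, le_abs_self C]
  nlinarith [le_abs_self C]
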